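/- arXiv:2601.06610 — 2 statements merged into one kernel-verified Lean document; each statement's English description precedes it below -/
import Mathlib

section
/- Let 0 < α ≤ 1 and 0 < ρ < 1, and define h(s₁,s₂) = (1+(ρ s₂)^α) / ((1+s₂^α)(1+(s₁+ρ s₂)^α)) for s₁, s₂ > 0. Then h is not symmetric: there exist s₁, s₂ > 0 with h(s₁,s₂) ≠ h(s₂,s₁). Consequently, the AR(1) model Y_t = ρY_{t-1} + ε_t with Mittag-Leffler ML(α,1) marginals is not time reversible. -/
open Real

/-- The joint Laplace transform of `(Y_{t-1}, Y_t)` in the AR(1) model with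
Mittag-Leffler ML(α,1) marginals is not a symmetric function of `(s₁, s₂)`;
hence the model is not time reversible. -/
theorem AR1_with_ML_marginals_not_time_reversible
    (α ρ : ℝ) (hα : 0 < α) (hα1 : α ≤ 1) (hρ : 0 < ρ) (hρ1 : ρ < 1) :
    let h : ℝ → ℝ → ℝ := fun s₁ s₂ =>
      (1 + (ρ * s₂) ^ α) / ((1 + s₂ ^ α) * (1 + (s₁ + ρ * s₂) ^ α))
    ∃ s₁ > 0, ∃ s₂ > 0, h s₁ s₂ ≠ h s₂ s₁ := by
  intro h
  have hρ0 : (0:ℝ) ≤ ρ := hρ.le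
  set A := ρ ^ α with hAdef
  set c := (2:ℝ) ^ α with hcdef
  set Q := (ρ⁻¹ + ρ) ^ α with hQdef
  have hA : 0 < A := Real.rpow_pos_of_pos hρ _
  have hA1 : A < 1 := Real.rpow_lt_one hρ0 hρ1 hα
  have hc : 1 < c := Real.one_lt_rpow_iff_of_pos two_pos |>.2 (Or.inl ⟨one_lt_two, hα⟩)
  have hQ : 0 < Q := Real.rpow_pos_of_pos (by positivity) _
  -- A * Q = (1 + ρ*ρ) ^ α
  have hAQ : A * Q = (1 + ρ * ρ) ^ α := by
    rw [hAdef, hQdef, ← Real.mul_rpow hρ0 (by positivity)]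
    congr 1
    field_simp
  -- concavity: (1 + ρ*ρ)^α ≥ (2^α + (2ρ²)^α)/2
  have hcon := (Real.concaveOn_rpow hα.le hα1).2
    (Set.mem_Ici.2 (by norm_num : (0:ℝ) ≤ 2))
    (Set.mem_Ici.2 (by positivity : (0:ℝ) ≤ 2 * (ρ * ρ)))
    (by norm_num : (0:ℝ) ≤ 1/2) (by norm_num : (0:ℝ) ≤ 1/2) (by norm_num)
  have hmid : ((1:ℝ)/2) • (2:ℝ) + ((1:ℝ)/2) • (2 * (ρ * ρ)) = 1 + ρ * ρ := by
    simp only [smul_eq_mul]; ring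
  rw [hmid] at hcon
  have h2ρ : (2 * (ρ * ρ)) ^ α = c * (A * A) := by
    rw [hcdef, hAdef, ← Real.mul_rpow hρ0 hρ0, ← Real.mul_rpow (by norm_num) (by positivity)]
  have hP2 : c / 2 + c * (A * A) / 2 ≤ (1 + ρ * ρ) ^ α := by
    have : ((1:ℝ)/2) • ((2:ℝ) ^ α) + ((1:ℝ)/2) • ((2 * (ρ * ρ)) ^ α)
        = c / 2 + c * (A * A) / 2 := by
      rw [h2ρ]; simp only [smul_eq_mul, hcdef]; ring
    linarith [hcon, this.symm.le]
  rw [← hAQ] at hP2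
  -- key numeric inequality
  have key : (1 + A) ^ 2 * (1 + c) < 4 * (A + A * Q) := by
    nlinarith [hP2, mul_pos (sub_pos.2 hc) (pow_pos (sub_pos.2 hA1) 2)]
  refine ⟨ρ⁻¹, inv_pos.2 hρ, 1, one_pos, ?_⟩
  have hinv : ρ * ρ⁻¹ = 1 := mul_inv_cancel₀ hρ.ne'
  have hinvA : (ρ⁻¹) ^ α = A⁻¹ := by rw [Real.inv_rpow hρ0, hAdef]
  have e1 : h ρ⁻¹ 1 = (1 + A) / ((1 + 1) * (1 + Q)) := by
    simp only [h, mul_one, Real.one_rpow, hAdef, hQdef]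
  have e2 : h 1 ρ⁻¹ = (1 + 1) / ((1 + A⁻¹) * (1 + c)) := by
    simp only [h, hinv, hinvA, Real.one_rpow, hcdef]
    norm_num
  rw [e1, e2]
  refine ne_of_lt ?_
  have hAi : 0 < A⁻¹ := inv_pos.2 hA
  rw [div_lt_div_iff₀ (by positivity) (by positivity)]
  rw [← mul_lt_mul_iff_left₀ hA]
  have hAinv : A * A⁻¹ = 1 := mul_inv_cancel₀ hA.ne'
  nlinarith [key, hAinv, hQ.le, hA.le]
end

section
/- Let 0 < α < 1 and define f_M(x) = (sin(πα)/π) ∫_0^∞ y^α e^{-xy} / (y^{2α} + 1 + 2 y^α cos(πα)) dy and F_M(x) = 1 − (sin(πα)/π) ∫_0^∞ y^{α−1} e^{-xy} / (y^{2α} + 1 + 2 y^α cos(πα)) dy for x > 0. Then for every x > 0, ∫_0^x f_M(t) dt = F_M(x); that is, F_M is the cumulative distribution function corresponding to the density f_M. -/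
open MeasureTheory Real Set Filter Topology

lemma quad_pos {c s : ℝ} (hs : 0 < s) (h1 : c^2 + s^2 = 1) (u : ℝ) :
    0 < u^2 + 2*u*c + 1 := by nlinarith [sq_nonneg (u+c), sq_nonneg s]

lemma quad_integral {c s : ℝ} (hs : 0 < s) (h1 : c^2 + s^2 = 1) :
    ∫ u in Ioi (0:ℝ), 1 / (u^2 + 2*u*c + 1) = (π/2 - Real.arctan (c/s)) / s := by
  have hs' : s ≠ 0 := hs.ne'
  have key : ∀ u : ℝ, 1 + ((u + c)/s)^2 = (u^2 + 2*u*c + 1)/s^2 := by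
    intro u; field_simp; linear_combination h1
  have hFd : ∀ u : ℝ, HasDerivAt (fun u => Real.arctan ((u + c)/s) / s)
      (1 / (u^2 + 2*u*c + 1)) u := by
    intro u
    have h1' : HasDerivAt (fun u : ℝ => (u + c)/s) (1/s) u := by
      simpa using ((hasDerivAt_id u).add_const c).div_const s
    have := ((Real.hasDerivAt_arctan ((u + c)/s)).comp u h1').div_const s
    refine this.congr_deriv ?_
    rw [key u]
    have h2 := (quad_pos hs h1 u).ne'
    field_simp
  have hlim : Tendsto (fun u => Real.arctan ((u + c)/s) / s) atTop (𝓝 ((π/2)/s)) := by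
    apply Tendsto.div_const
    apply (Real.tendsto_arctan_atTop.mono_right nhdsWithin_le_nhds).comp
    apply Tendsto.atTop_div_const hs
    exact tendsto_atTop_add_const_right _ c tendsto_id
  have := integral_Ioi_of_hasDerivAt_of_nonneg (g := fun u => Real.arctan ((u + c)/s) / s)
    (g' := fun u => 1 / (u^2 + 2*u*c + 1)) ((hFd 0).continuousAt.continuousWithinAt)
    (fun u _ => hFd u) (fun u _ => div_nonneg zero_le_one (quad_pos hs h1 u).le) hlim
  rw [this]; simp [sub_div]

lemma key_integral (α : ℝ) (hα : 0 < α) (hα1 : α < 1) :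
    ∫ y in Ioi (0:ℝ), y^(α-1) / (y^(2*α) + 1 + 2*y^α*Real.cos (π*α))
      = π / Real.sin (π*α) := by
  set c := Real.cos (π*α) with hc
  set s := Real.sin (π*α) with hsdef
  have hθ0 : 0 < π*α := by positivity
  have hθπ : π*α < π := by nlinarith [Real.pi_pos]
  have hs : 0 < s := Real.sin_pos_of_pos_of_lt_pi hθ0 hθπ
  have h1 : c^2 + s^2 = 1 := Real.cos_sq_add_sin_sq _
  have harc : Real.arctan (c/s) = π/2 - π*α := by
    have : c/s = Real.tan (π/2 - π*α) := by
      rw [Real.tan_eq_sin_div_cos, Real.sin_pi_div_two_sub, Real.cos_pi_div_two_sub]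
    rw [this, Real.arctan_tan (by linarith) (by linarith)]
  have hsub := integral_comp_rpow_Ioi (fun u => 1 / (u^2 + 2*u*c + 1)) hα.ne'
  rw [quad_integral hs h1, harc] at hsub
  have hcong : ∫ y in Ioi (0:ℝ), (|α| * y^(α-1)) • (1 / ((y^α)^2 + 2*(y^α)*c + 1))
      = ∫ y in Ioi (0:ℝ), α * (y^(α-1) / (y^(2*α) + 1 + 2*y^α*c)) := by
    apply setIntegral_congr_fun measurableSet_Ioi
    intro y hy
    have hy' : (0:ℝ) < y := hy
    simp only [smul_eq_mul]
    rw [abs_of_pos hα, show y^(2*α) = (y^α)^2 by rw [two_mul, Real.rpow_add hy', sq]]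
    ring
  rw [hcong, MeasureTheory.integral_const_mul] at hsub
  have hα' : α ≠ 0 := hα.ne'
  have hs' : s ≠ 0 := hs.ne'
  set I := ∫ y in Ioi (0:ℝ), y^(α-1) / (y^(2*α) + 1 + 2*y^α*c) with hI
  field_simp at hsub ⊢
  exact mul_left_cancel₀ hα' (by linarith)


lemma quad_lb1 {c s u : ℝ} (h1 : c^2 + s^2 = 1) (hu : 0 ≤ u) :
    s^2 ≤ u^2 + 2*u*c + 1 := by nlinarith [sq_nonneg (u+c)]

lemma quad_lb2 {c s u : ℝ} (h1 : c^2 + s^2 = 1) :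
    s^2 * u^2 ≤ u^2 + 2*u*c + 1 := by nlinarith [sq_nonneg (u*c+1)]

lemma Dform {α y : ℝ} (hy : 0 < y) (c : ℝ) :
    y^(2*α) + 1 + 2*y^α*c = (y^α)^2 + 2*(y^α)*c + 1 := by
  rw [two_mul, Real.rpow_add hy, sq]; ring

lemma D_pos {α : ℝ} {y : ℝ} (hy : 0 < y) {c s : ℝ} (hs : 0 < s) (h1 : c^2 + s^2 = 1) :
    0 < y^(2*α) + 1 + 2*y^α*c := by
  rw [Dform hy]; nlinarith [sq_nonneg (y^α + c)]

lemma int_A (α : ℝ) (hα : 0 < α) (hα1 : α < 1) :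
    IntegrableOn (fun y => y^(α-1) / (y^(2*α) + 1 + 2*y^α*Real.cos (π*α)))
      (Ioi (0:ℝ)) := by
  set c := Real.cos (π*α)
  set s := Real.sin (π*α) with hsdef
  have hθ0 : 0 < π*α := by positivity
  have hθπ : π*α < π := by nlinarith [Real.pi_pos]
  have hs : 0 < s := Real.sin_pos_of_pos_of_lt_pi hθ0 hθπ
  have h1 : c^2 + s^2 = 1 := Real.cos_sq_add_sin_sq _
  have hmeas : Measurable fun y : ℝ => y^(α-1) / (y^(2*α) + 1 + 2*y^α*c) := by
    fun_prop
  rw [show Ioi (0:ℝ) = Ioc 0 1 ∪ Ioi 1 from (Ioc_union_Ioi_eq_Ioi zero_le_one).symm]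
  apply IntegrableOn.union
  · -- on Ioc 0 1
    have hbase := intervalIntegral.intervalIntegrable_rpow' (a := 0) (b := 1)
      (show (-1:ℝ) < α - 1 by linarith)
    rw [intervalIntegrable_iff_integrableOn_Ioc_of_le zero_le_one] at hbase
    have hbint : IntegrableOn (fun y : ℝ => y^(α-1) * (s^2)⁻¹) (Ioc 0 1) :=
      hbase.mul_const _
    apply hbint.mono' (hmeas.aestronglyMeasurable.restrict)
    filter_upwards [ae_restrict_mem measurableSet_Ioc] with y hy
    have hy0 : 0 < y := hy.1
    have hDpos := D_pos (α := α) hy0 hs h1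
    have hup : 0 ≤ y^(α-1) := Real.rpow_nonneg hy0.le _
    rw [Real.norm_eq_abs, abs_of_nonneg (div_nonneg hup hDpos.le), div_eq_mul_inv]
    apply mul_le_mul_of_nonneg_left _ hup
    apply inv_anti₀ (by positivity)
    rw [Dform hy0]
    exact quad_lb1 h1 (Real.rpow_nonneg hy0.le _)
  · -- on Ioi 1
    have hbint : IntegrableOn (fun y : ℝ => (s^2)⁻¹ * y^(-α-1)) (Ioi 1) :=
      (integrableOn_Ioi_rpow_of_lt (by linarith) zero_lt_one).const_mul _
    apply hbint.mono' (hmeas.aestronglyMeasurable.restrict)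
    filter_upwards [ae_restrict_mem measurableSet_Ioi] with y hy
    have hy0 : (0:ℝ) < y := lt_trans zero_lt_one hy
    have hDpos := D_pos (α := α) hy0 hs h1
    have hup : 0 ≤ y^(α-1) := Real.rpow_nonneg hy0.le _
    rw [Real.norm_eq_abs, abs_of_nonneg (div_nonneg hup hDpos.le)]
    have hD2 : s^2 * y^(2*α) ≤ y^(2*α) + 1 + 2*y^α*c := by
      rw [Dform hy0, show y^(2*α) = (y^α)^2 by rw [two_mul, Real.rpow_add hy0, sq]]
      exact quad_lb2 h1
    have h2pos : 0 < s^2 * y^(2*α) := by positivity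
    calc y^(α-1) / (y^(2*α) + 1 + 2*y^α*c) ≤ y^(α-1) / (s^2 * y^(2*α)) :=
          div_le_div_of_nonneg_left hup h2pos hD2
      _ = (s^2)⁻¹ * y^(-α-1) := by
          rw [div_mul_eq_div_div_swap, show y^(α-1)/y^(2*α) = y^(-α-1) by
            rw [← Real.rpow_sub hy0]; congr 1; ring, div_eq_inv_mul]


lemma exp_Ioc_integral {x y : ℝ} (hx : 0 ≤ x) (hy : 0 < y) :
    ∫ t in Ioc (0:ℝ) x, Real.exp (-(t*y)) = (1 - Real.exp (-(x*y))) / y := by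
  rw [← intervalIntegral.integral_of_le hx]
  have h : ∀ t : ℝ, Real.exp (-(t*y)) = Real.exp (t * (-y)) := fun t => by ring_nf
  simp_rw [h]
  rw [intervalIntegral.integral_comp_mul_right Real.exp (neg_ne_zero.mpr hy.ne'),
    integral_exp]
  have hy' : y ≠ 0 := hy.ne'
  rw [smul_eq_mul]
  rw [show x * -y = -(x*y) by ring, zero_mul, Real.exp_zero]
  rw [inv_mul_eq_div, div_eq_div_iff (neg_ne_zero.mpr hy') hy']
  ring


/-- The integral representation `F_M` of the Mittag-Leffler ML(α,1) distribution
function is the cumulative distribution function of the density `f_M`: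
`∫_0^x f_M(t) dt = F_M(x)` for all `x > 0`. -/
theorem ML_cdf_eq_integral_of_density
    (α : ℝ) (hα : 0 < α) (hα1 : α < 1) :
    let f : ℝ → ℝ := fun x =>
      (Real.sin (π * α) / π) * ∫ y in Set.Ioi (0:ℝ),
        y ^ α * Real.exp (-(x * y)) / (y ^ (2 * α) + 1 + 2 * y ^ α * Real.cos (π * α))
    let F : ℝ → ℝ := fun x =>
      1 - (Real.sin (π * α) / π) * ∫ y in Set.Ioi (0:ℝ),
        y ^ (α - 1) * Real.exp (-(x * y)) / (y ^ (2 * α) + 1 + 2 * y ^ α * Real.cos (π * α))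
    ∀ x > 0, ∫ t in (0:ℝ)..x, f t = F x := by
  intro f F x hx
  have hθ0 : 0 < π*α := by positivity
  have hθπ : π*α < π := by nlinarith [Real.pi_pos]
  have hs : 0 < Real.sin (π*α) := Real.sin_pos_of_pos_of_lt_pi hθ0 hθπ
  have h1 : Real.cos (π*α)^2 + Real.sin (π*α)^2 = 1 := Real.cos_sq_add_sin_sq _
  have hπ : (0:ℝ) < π := Real.pi_pos
  -- inner integral computation
  have hinner : ∀ y ∈ Ioi (0:ℝ),
      (∫ t in Ioc (0:ℝ) x, y^α * Real.exp (-(t*y)) / (y^(2*α) + 1 + 2*y^α*Real.cos (π*α)))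
        = y^(α-1) * (1 - Real.exp (-(x*y))) / (y^(2*α) + 1 + 2*y^α*Real.cos (π*α)) := by
    intro y hy
    have hy0 : (0:ℝ) < y := hy
    have hD := D_pos (α := α) hy0 hs h1
    have hcong : ∀ t : ℝ, y^α * Real.exp (-(t*y)) / (y^(2*α) + 1 + 2*y^α*Real.cos (π*α))
        = (y^α / (y^(2*α) + 1 + 2*y^α*Real.cos (π*α))) * Real.exp (-(t*y)) := fun t => by ring
    simp_rw [hcong]
    rw [MeasureTheory.integral_const_mul, exp_Ioc_integral hx.le hy0,
      show y^(α-1) = y^α / y by rw [Real.rpow_sub hy0, Real.rpow_one]]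
    rw [div_mul_div_comm, div_mul_eq_mul_div, div_div]
    ring_nf
  have hgmeas : Measurable (fun p : ℝ×ℝ =>
      p.2^α * Real.exp (-(p.1*p.2)) / (p.2^(2*α) + 1 + 2*p.2^α*Real.cos (π*α))) := by fun_prop
  have hGmeas : Measurable (fun y : ℝ =>
      y^(α-1) * (1 - Real.exp (-(x*y))) / (y^(2*α) + 1 + 2*y^α*Real.cos (π*α))) := by fun_prop
  have hBmeas : Measurable (fun y : ℝ =>
      y^(α-1) * Real.exp (-(x*y)) / (y^(2*α) + 1 + 2*y^α*Real.cos (π*α))) := by fun_prop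
  have hIntA := int_A α hα hα1
  have hKey := key_integral α hα hα1
  -- bound lemma for G
  have hGbound : ∀ y ∈ Ioi (0:ℝ),
      ‖y^(α-1) * (1 - Real.exp (-(x*y))) / (y^(2*α) + 1 + 2*y^α*Real.cos (π*α))‖
        ≤ y^(α-1) / (y^(2*α) + 1 + 2*y^α*Real.cos (π*α)) := by
    intro y hy
    have hy0 : (0:ℝ) < y := hy
    have hD := D_pos (α := α) hy0 hs h1
    have hup : 0 ≤ y^(α-1) := Real.rpow_nonneg hy0.le _
    have he1 : Real.exp (-(x*y)) ≤ 1 := Real.exp_le_one_iff.mpr (by nlinarith)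
    have he0 : 0 < Real.exp (-(x*y)) := Real.exp_pos _
    rw [Real.norm_eq_abs, abs_of_nonneg
      (div_nonneg (mul_nonneg hup (by linarith)) hD.le)]
    exact (div_le_div_iff_of_pos_right hD).mpr (mul_le_of_le_one_right hup (by linarith))
  have hIntG : IntegrableOn (fun y : ℝ =>
      y^(α-1) * (1 - Real.exp (-(x*y))) / (y^(2*α) + 1 + 2*y^α*Real.cos (π*α))) (Ioi 0) := by
    apply hIntA.mono' hGmeas.aestronglyMeasurable.restrict
    filter_upwards [ae_restrict_mem measurableSet_Ioi] with y hy
    exact hGbound y hy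
  have hIntB : IntegrableOn (fun y : ℝ =>
      y^(α-1) * Real.exp (-(x*y)) / (y^(2*α) + 1 + 2*y^α*Real.cos (π*α))) (Ioi 0) := by
    apply hIntA.mono' hBmeas.aestronglyMeasurable.restrict
    filter_upwards [ae_restrict_mem measurableSet_Ioi] with y hy
    have hy0 : (0:ℝ) < y := hy
    have hD := D_pos (α := α) hy0 hs h1
    have hup : 0 ≤ y^(α-1) := Real.rpow_nonneg hy0.le _
    have he1 : Real.exp (-(x*y)) ≤ 1 := Real.exp_le_one_iff.mpr (by nlinarith)
    have he0 : 0 < Real.exp (-(x*y)) := Real.exp_pos _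
    rw [Real.norm_eq_abs, abs_of_nonneg (by positivity)]
    exact (div_le_div_iff_of_pos_right hD).mpr (mul_le_of_le_one_right hup he1)
  -- product integrability
  have hprod : Integrable (fun p : ℝ×ℝ =>
      p.2^α * Real.exp (-(p.1*p.2)) / (p.2^(2*α) + 1 + 2*p.2^α*Real.cos (π*α)))
      ((volume.restrict (Ioc 0 x)).prod (volume.restrict (Ioi 0))) := by
    rw [integrable_prod_iff' hgmeas.aestronglyMeasurable]
    constructor
    · filter_upwards [ae_restrict_mem measurableSet_Ioi] with y hy
      have hcont : Continuous fun t : ℝ =>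
          y^α * Real.exp (-(t*y)) / (y^(2*α) + 1 + 2*y^α*Real.cos (π*α)) :=
        Continuous.div_const (continuous_const.mul
          (Real.continuous_exp.comp ((continuous_id.mul continuous_const).neg))) _
      exact hcont.integrableOn_Ioc
    · apply hIntG.congr
      filter_upwards [ae_restrict_mem measurableSet_Ioi] with y hy
      have hy0 : (0:ℝ) < y := hy
      have hD := D_pos (α := α) hy0 hs h1
      rw [← hinner y hy]
      apply setIntegral_congr_fun measurableSet_Ioc
      intro t _
      dsimp only
      rw [Real.norm_eq_abs, abs_of_nonneg]
      positivity
  -- main computation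
  show (∫ t in (0:ℝ)..x, Real.sin (π*α)/π * ∫ y in Ioi (0:ℝ),
        y^α * Real.exp (-(t*y)) / (y^(2*α) + 1 + 2*y^α*Real.cos (π*α)))
      = 1 - Real.sin (π*α)/π * ∫ y in Ioi (0:ℝ),
        y^(α-1) * Real.exp (-(x*y)) / (y^(2*α) + 1 + 2*y^α*Real.cos (π*α))
  rw [intervalIntegral.integral_const_mul, intervalIntegral.integral_of_le hx.le]
  rw [MeasureTheory.integral_integral_swap hprod]
  rw [setIntegral_congr_fun measurableSet_Ioi (fun y hy => hinner y hy)]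
  have hsplit : (∫ y in Ioi (0:ℝ), y^(α-1) * (1 - Real.exp (-(x*y))) / (y^(2*α) + 1 + 2*y^α*Real.cos (π*α)))
      = π/Real.sin (π*α) - ∫ y in Ioi (0:ℝ), y^(α-1) * Real.exp (-(x*y)) / (y^(2*α) + 1 + 2*y^α*Real.cos (π*α)) := by
    rw [← hKey, ← integral_sub hIntA hIntB]
    apply setIntegral_congr_fun measurableSet_Ioi
    intro y _
    ring
  rw [hsplit]
  set J := ∫ y in Ioi (0:ℝ), y^(α-1) * Real.exp (-(x*y)) / (y^(2*α) + 1 + 2*y^α*Real.cos (π*α)) with hJ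
  have hs' : Real.sin (π*α) ≠ 0 := hs.ne'
  have hπ' : π ≠ 0 := hπ.ne'
  field_simp
end
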